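/- arXiv:2406.06906 — 2 statements merged into one kernel-verified Lean document; each statement's English description precedes it below -/
import Mathlib

section
/- Let K ⊂ ℝⁿ satisfy 1 ≤ M_K/m_K ≤ n, let ε, r > 0, let J₀ = J₀(n, ε, r) and c = c(n, ε, r) be the constants for which every component of an (ε, r)-minimizer of P_K is a (J₀, cr)-John domain, and let 0 < δ ≤ cr/(3nJ₀). Then any (component of an) (ε, r)-minimizer E of P_K satisfying (1−δ)K ⊂ E ⊂ (1+δ)K is a J-John domain with John center the origin, where J = J(n, ε, r). -/
open MeasureTheory Metric Set Filter Topology Bornology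
open scoped ENNReal NNReal Pointwise

noncomputable section

/-- Euclidean `n`-space. -/
abbrev En (n : ℕ) : Type := EuclideanSpace ℝ (Fin n)

variable {n : ℕ}

/-- The set of points where `A` has Lebesgue density `c`. -/
def densitySet (A : Set (En n)) (c : ℝ≥0∞) : Set (En n) :=
  {x | Tendsto (fun r : ℝ => volume (A ∩ ball x r) / volume (ball x r)) (𝓝[>] (0:ℝ)) (𝓝 c)}

/-- The measure-theoretic (essential) boundary of `A`. -/
def mtBoundary (A : Set (En n)) : Set (En n) :=
  (densitySet A 0 ∪ densitySet A 1)ᶜ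

/-- A set has finite perimeter iff its measure-theoretic boundary has finite
`H^{n-1}` measure (Federer's criterion). -/
def HasFinitePerimeter (A : Set (En n)) : Prop :=
  μH[(n : ℝ) - 1] (mtBoundary A) < ⊤

/-- (Euclidean) perimeter `P(A) = H^{n-1}(∂_* A)` (De Giorgi/Federer). -/
def perim (A : Set (En n)) : ℝ≥0∞ := μH[(n : ℝ) - 1] (mtBoundary A)

/-- Relative perimeter `P(A; V) = H^{n-1}(∂_* A ∩ V)`. -/
def perimIn (A V : Set (En n)) : ℝ≥0∞ := μH[(n : ℝ) - 1] (mtBoundary A ∩ V)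

/-- Divergence of a vector field on `En n`. -/
def divg (φ : En n → En n) (x : En n) : ℝ :=
  ∑ i, fderiv ℝ φ x (EuclideanSpace.single i 1) i

/-- Anisotropic (Wulff) perimeter associated to the convex body `K`, defined by
duality: `P_K(A) = sup {∫_A div φ : φ ∈ C¹_c, φ(x) ∈ K̄ ∀x}`, which agrees with
`∫_{∂*A} ‖ν_A‖_* dH^{n-1}` for sets of finite perimeter. -/
def wulffP (K A : Set (En n)) : ℝ :=
  sSup {a : ℝ | ∃ φ : En n → En n, ContDiff ℝ 1 φ ∧ HasCompactSupport φ ∧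
    (∀ x, φ x ∈ closure K) ∧ a = ∫ x in A, divg φ x}

/-- The support function `‖y‖_* = sup_{x ∈ K} x ⬝ y`. -/
def suppFn (K : Set (En n)) (y : En n) : ℝ :=
  sSup ((fun x : En n => (inner ℝ x y : ℝ)) '' K)

/-- `m_K = inf {‖v‖_* : v ∈ S^{n-1}}`. -/
def mConst (K : Set (En n)) : ℝ := sInf (suppFn K '' sphere (0 : En n) 1)

/-- `M_K = sup {‖v‖_* : v ∈ S^{n-1}}`. -/
def MConst (K : Set (En n)) : ℝ := sSup (suppFn K '' sphere (0 : En n) 1)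

/-- `K` is an admissible Wulff shape: open, bounded, convex, contains `0`,
and `|K| = |B_1|`. -/
def WulffShape (K : Set (En n)) : Prop :=
  IsOpen K ∧ Convex ℝ K ∧ IsBounded K ∧ (0 : En n) ∈ K ∧
    volume K = volume (ball (0 : En n) 1)

/-- The Fraenkel-type asymmetry `A(E) = inf_{x} |E Δ (x + K)|`. -/
def asym (K A : Set (En n)) : ℝ :=
  ⨅ x : En n, (volume (symmDiff A (x +ᵥ K))).toReal

/-- `E` is an `(ε, r)`-minimizer of the Wulff perimeter `P_K`. -/
def WulffMinimizer (K : Set (En n)) (ε r : ℝ) (E : Set (En n)) : Prop :=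
  MeasurableSet E ∧ HasFinitePerimeter E ∧
    ∀ G : Set (En n), MeasurableSet G →
      (∃ x ∈ E, closure (symmDiff E G) ⊆ x +ᵥ r • K) →
      wulffP K E ≤ wulffP K G + ε * (volume (symmDiff E G)).toReal

/-- `γ : [0,1] → ℝⁿ` is a `J`-John curve in `Ω` from `x` to `y`:
it lies in `Ω` and the length of the piece from `x` to any point `γ t` is at most
`J · dist(γ t, ∂Ω)`. -/
def IsJohnCurve (J : ℝ) (Ω : Set (En n)) (x y : En n) (γ : ℝ → En n) : Prop :=
  ContinuousOn γ (Icc 0 1) ∧ γ 0 = x ∧ γ 1 = y ∧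
    (∀ t ∈ Icc (0:ℝ) 1, γ t ∈ Ω) ∧
    ∀ t ∈ Icc (0:ℝ) 1,
      eVariationOn γ (Icc 0 t) ≤ ENNReal.ofReal (J * infDist (γ t) (frontier Ω))

/-- `Ω` is a `J`-John domain with John center `x₀`. -/
def IsJohnWithCenter (J : ℝ) (Ω : Set (En n)) (x₀ : En n) : Prop :=
  x₀ ∈ Ω ∧ ∀ x ∈ Ω, ∃ γ : ℝ → En n, IsJohnCurve J Ω x x₀ γ

/-- `Ω` is a `J`-John domain. -/
def IsJohn (J : ℝ) (Ω : Set (En n)) : Prop :=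
  ∃ x₀ : En n, IsJohnWithCenter J Ω x₀

/-- `Ω` is a `(J, s)`-John domain. -/
def IsJohnLoc (J s : ℝ) (Ω : Set (En n)) : Prop :=
  ∀ z ∈ frontier Ω, ∀ r : ℝ, 0 < r → r < s → ∀ x ∈ ball z r ∩ Ω,
    ∃ w ∈ ball z (J * r) ∩ Ω, J⁻¹ * r ≤ infDist w (frontier Ω) ∧
      ∃ γ : ℝ → En n, IsJohnCurve J Ω x w γ

/-- `u ∈ W^{1,1}(Ω)` with weak gradient `g`. -/
def IsW11 (Ω : Set (En n)) (u : En n → ℝ) (g : En n → En n) : Prop :=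
  IntegrableOn u Ω volume ∧ IntegrableOn g Ω volume ∧
    ∀ φ : En n → ℝ, ContDiff ℝ (⊤ : ℕ∞) φ → HasCompactSupport φ → tsupport φ ⊆ Ω →
      ∀ i : Fin n,
        ∫ x in Ω, u x * fderiv ℝ φ x (EuclideanSpace.single i 1)
          = - ∫ x in Ω, φ x * g x i

/-- The closed axis-parallel cube with center `c` and edge length `l`. -/
def cube (c : En n) (l : ℝ) : Set (En n) :=
  {x : En n | ∀ i, |x i - c i| ≤ l / 2}

/-- A Whitney decomposition of the open set `Ω`: countably many closed cubes
`Q j = cube (c j) (l j)` covering `Ω`, with bounded overlap of the dilated cubes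
`(11/10) Q j ⊆ Ω`, with `√n l(Q) ≤ dist(Q, ∂Ω) ≤ 4√n l(Q)`, and comparable
side lengths of touching cubes. -/
structure IsWhitney (Ω : Set (En n)) (c : ℕ → En n) (l : ℕ → ℝ) : Prop where
  pos : ∀ j, 0 < l j
  cover : (⋃ j, cube (c j) (l j)) = Ω
  subset : ∀ j, cube (c j) (11/10 * l j) ⊆ Ω
  overlap : ∃ C : ℕ, 0 < C ∧ ∀ x ∈ Ω,
    {j | x ∈ cube (c j) (11/10 * l j)}.Finite ∧
    Set.ncard {j | x ∈ cube (c j) (11/10 * l j)} ≤ C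
  distLower : ∀ j, ∀ x ∈ cube (c j) (l j), Real.sqrt n * l j ≤ infDist x (frontier Ω)
  distUpper : ∀ j, ∃ x ∈ cube (c j) (l j), infDist x (frontier Ω) ≤ 4 * Real.sqrt n * l j
  neighbor : ∀ i j, (cube (c i) (l i) ∩ cube (c j) (l j)).Nonempty → l i ≤ 4 * l j


/-! ### Auxiliary lemmas for the proof of `minimizer_close_to_K_isJohn` -/

/-- Variation bound for Lipschitz-type curves on an interval. -/
lemma evar_le_of_lip {f : ℝ → En n} {C a b : ℝ} (hC : 0 ≤ C)
    (h : ∀ u ∈ Icc a b, ∀ v ∈ Icc a b, u ≤ v → dist (f u) (f v) ≤ C * (v - u)) :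
    eVariationOn f (Icc a b) ≤ ENNReal.ofReal (C * (b - a)) := by
  rcases le_or_gt a b with hab | hab
  · refine iSup_le ?_
    rintro ⟨m, u, hu, us⟩
    have key : ∀ i, edist (f (u (i+1))) (f (u i)) ≤ ENNReal.ofReal (C * u (i+1) - C * u i) := by
      intro i
      rw [edist_dist, dist_comm]
      refine ENNReal.ofReal_le_ofReal ?_
      have := h (u i) (us i) (u (i+1)) (us (i+1)) (hu (Nat.le_succ i))
      nlinarith [this]
    calc ∑ i ∈ Finset.range m, edist (f (u (i+1))) (f (u i))
        ≤ ∑ i ∈ Finset.range m, ENNReal.ofReal (C * u (i+1) - C * u i) :=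
          Finset.sum_le_sum fun i _ => key i
      _ = ENNReal.ofReal (∑ i ∈ Finset.range m, (C * u (i+1) - C * u i)) := by
          rw [ENNReal.ofReal_sum_of_nonneg]
          intro i _
          have := hu (Nat.le_succ i)
          nlinarith
      _ ≤ ENNReal.ofReal (C * (b - a)) := by
          rw [Finset.sum_range_sub (fun i => C * u i)]
          refine ENNReal.ofReal_le_ofReal ?_
          have h0 := (us 0).1
          have h3 := (us m).2
          nlinarith
  · rw [Set.Icc_eq_empty_of_lt hab]
    rw [eVariationOn.subsingleton f subsingleton_empty]
    exact zero_le

/-- If a ball around a point of an open set has radius at most the distance to the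
frontier, it is contained in the set. -/
lemma ball_subset_of_le_infDist {E : Set (En n)} (hE : IsOpen E) {p : En n} (hp : p ∈ E)
    {ρ : ℝ} (hρ : ρ ≤ infDist p (frontier E)) : ball p ρ ⊆ E := by
  intro q hq
  have hρ0 : 0 < ρ := lt_of_le_of_lt dist_nonneg (mem_ball'.1 hq)
  have hdisj : ∀ y ∈ ball p ρ, y ∉ frontier E := by
    intro y hy hyf
    have h1 : infDist p (frontier E) ≤ dist p y := infDist_le_dist_of_mem hyf
    have h2 : dist p y < ρ := mem_ball'.1 hy
    linarith
  have hcover : ball p ρ ⊆ E ∪ (closure E)ᶜ := by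
    intro y hy
    by_cases hyE : y ∈ closure E
    · left
      have : y ∈ interior E := by
        rcases (em (y ∈ interior E)) with h | h
        · exact h
        · exact absurd ⟨hyE, h⟩ (hdisj y hy)
      rwa [hE.interior_eq] at this
    · exact Or.inr hyE
  by_contra hqE
  have hprec : IsPreconnected (ball p ρ) := (convex_ball p ρ).isPreconnected
  have hqC : q ∈ (closure E)ᶜ := by
    rcases hcover hq with h | h
    · exact absurd h hqE
    · exact h
  have := hprec E (closure E)ᶜ hE (isClosed_closure.isOpen_compl) hcover
    ⟨p, mem_ball_self hρ0, hp⟩ ⟨q, hq, hqC⟩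
  rcases this with ⟨y, _, hyE, hyC⟩
  exact hyC (subset_closure hyE)

/-- Lower bound for the distance to the frontier given an inscribed ball. -/
lemma le_infDist_frontier_of_ball_subset {E : Set (En n)} (hE : IsOpen E)
    (hfr : (frontier E).Nonempty) {p : En n} {ρ : ℝ} (h : ball p ρ ⊆ E) :
    ρ ≤ infDist p (frontier E) := by
  by_contra hlt
  push_neg at hlt
  obtain ⟨y, hyf, hyd⟩ := (infDist_lt_iff hfr).1 hlt
  have h1 : y ∈ E := h (mem_ball'.2 hyd)
  have h2 : y ∉ E := by
    intro hyE
    have := hE.frontier_eq ▸ hyf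
    exact this.2 hyE
  exact h2 h1

/-- Membership in a positive dilate of an open convex body via the gauge. -/
lemma mem_smul_iff_gauge_lt {K : Set (En n)} (hKo : IsOpen K) (hKc : Convex ℝ K)
    (h0 : (0:En n) ∈ K) {c : ℝ} (hc : 0 < c) {y : En n} :
    y ∈ c • K ↔ gauge K y < c := by
  rw [mem_smul_set_iff_inv_smul_mem₀ hc.ne']
  have hset := gauge_lt_one_eq_self_of_isOpen hKc h0 hKo
  constructor
  · intro h
    have : gauge K (c⁻¹ • y) < 1 := by rw [← hset] at h; exact h
    rw [gauge_smul_of_nonneg (inv_nonneg.2 hc.le), smul_eq_mul] at this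
    calc gauge K y = c * (c⁻¹ * gauge K y) := by field_simp
    _ < c * 1 := by exact mul_lt_mul_of_pos_left this hc
    _ = c := mul_one c
  · intro h
    have : gauge K (c⁻¹ • y) < 1 := by
      rw [gauge_smul_of_nonneg (inv_nonneg.2 hc.le), smul_eq_mul]
      calc c⁻¹ * gauge K y < c⁻¹ * c := by
            exact mul_lt_mul_of_pos_left h (inv_pos.2 hc)
      _ = 1 := by field_simp
    rw [← hset]; exact this

/-- The norm is controlled by the gauge of a bounded body. -/
lemma norm_le_gauge_mul {K : Set (En n)} (habs : Absorbent ℝ K) {M : ℝ} (hM0 : 0 < M)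
    (hM : ∀ y ∈ K, ‖y‖ ≤ M) (x : En n) : ‖x‖ ≤ gauge K x * M := by
  refine le_of_forall_pos_le_add ?_
  intro ε hε
  obtain ⟨b, hb0, hblt, hbmem⟩ := exists_lt_of_gauge_lt habs
    (lt_add_of_pos_right (gauge K x) (show (0:ℝ) < ε / M by positivity))
  obtain ⟨y, hyK, hxy⟩ := hbmem
  have hnx : ‖x‖ = b * ‖y‖ := by
    rw [← hxy, norm_smul, Real.norm_eq_abs, abs_of_pos hb0]
  have h1 : b * ‖y‖ ≤ b * M := mul_le_mul_of_nonneg_left (hM y hyK) hb0.le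
  have h2 : b * M ≤ (gauge K x + ε / M) * M := mul_le_mul_of_nonneg_right hblt.le hM0.le
  have h3 : (gauge K x + ε / M) * M = gauge K x * M + ε := by field_simp
  linarith

/-- Every element of `K` has norm at most `MConst K`. -/
lemma norm_le_MConst {K : Set (En n)} (hn : 2 ≤ n) (hKb : IsBounded K) (h0 : (0:En n) ∈ K) :
    ∀ x ∈ K, ‖x‖ ≤ MConst K := by
  have : Nontrivial (En n) := by
    have : 0 < Module.finrank ℝ (En n) := by rw [finrank_euclideanSpace_fin]; omega
    exact Module.nontrivial_of_finrank_pos this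
  obtain ⟨R, hR⟩ := hKb.subset_closedBall (0 : En n)
  have hRnn : ∀ y ∈ K, ‖y‖ ≤ max R 0 := by
    intro y hy
    exact le_trans (by simpa [dist_zero_right] using mem_closedBall.1 (hR hy)) (le_max_left _ _)
  have hbddI : ∀ v : En n, BddAbove ((fun x : En n => (inner ℝ x v : ℝ)) '' K) := by
    intro v
    refine ⟨max R 0 * ‖v‖, ?_⟩
    rintro a ⟨x, hx, rfl⟩
    calc (inner ℝ x v : ℝ) ≤ ‖x‖ * ‖v‖ := real_inner_le_norm x v
    _ ≤ max R 0 * ‖v‖ := mul_le_mul_of_nonneg_right (hRnn x hx) (norm_nonneg v)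
  have hbddS : BddAbove (suppFn K '' sphere (0:En n) 1) := by
    refine ⟨max R 0, ?_⟩
    rintro a ⟨v, hv, rfl⟩
    have hv1 : ‖v‖ = 1 := mem_sphere_zero_iff_norm.1 hv
    refine csSup_le ⟨(0:ℝ), ⟨0, h0, by simp⟩⟩ ?_
    rintro a ⟨x, hx, rfl⟩
    calc (inner ℝ x v : ℝ) ≤ ‖x‖ * ‖v‖ := real_inner_le_norm x v
    _ ≤ max R 0 := by rw [hv1, mul_one]; exact hRnn x hx
  have hsupp_nonneg : ∀ v : En n, 0 ≤ suppFn K v := by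
    intro v
    have : (inner ℝ (0:En n) v : ℝ) ≤ suppFn K v := le_csSup (hbddI v) ⟨0, h0, rfl⟩
    simpa using this
  intro x hx
  rcases eq_or_ne x 0 with rfl | hx0
  · simp only [norm_zero]
    obtain ⟨v, hv⟩ := (NormedSpace.sphere_nonempty (E := En n) (x := 0) (r := 1)).2 zero_le_one
    exact le_trans (hsupp_nonneg v) (le_csSup hbddS ⟨v, hv, rfl⟩)
  · have hxn : 0 < ‖x‖ := norm_pos_iff.2 hx0
    set v := ‖x‖⁻¹ • x with hv
    have hvs : v ∈ sphere (0:En n) 1 := by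
      simp [hv, norm_smul, abs_of_pos (inv_pos.2 hxn), inv_mul_cancel₀ hxn.ne']
    have h1 : (inner ℝ x v : ℝ) = ‖x‖ := by
      rw [hv, real_inner_smul_right, real_inner_self_eq_norm_mul_norm]
      field_simp
    calc ‖x‖ = (inner ℝ x v : ℝ) := h1.symm
    _ ≤ suppFn K v := le_csSup (hbddI v) ⟨x, hx, rfl⟩
    _ ≤ MConst K := le_csSup hbddS ⟨v, hvs, rfl⟩

/-- The ball of radius `mConst K` is contained in the closure of `K`. -/
lemma ball_mConst_subset_closure {K : Set (En n)} (hn : 2 ≤ n) (hKc : Convex ℝ K)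
    (hKb : IsBounded K) (h0 : (0:En n) ∈ K) :
    ball (0 : En n) (mConst K) ⊆ closure K := by
  have : Nontrivial (En n) := by
    have : 0 < Module.finrank ℝ (En n) := by rw [finrank_euclideanSpace_fin]; omega
    exact Module.nontrivial_of_finrank_pos this
  obtain ⟨R, hR⟩ := hKb.subset_closedBall (0 : En n)
  have hRnn : ∀ y ∈ K, ‖y‖ ≤ max R 0 := fun y hy =>
    le_trans (by simpa [dist_zero_right] using mem_closedBall.1 (hR hy)) (le_max_left _ _)
  have hbddI : ∀ v : En n, BddAbove ((fun x : En n => (inner ℝ x v : ℝ)) '' K) := by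
    intro v
    refine ⟨max R 0 * ‖v‖, ?_⟩
    rintro a ⟨x, hx, rfl⟩
    calc (inner ℝ x v : ℝ) ≤ ‖x‖ * ‖v‖ := real_inner_le_norm x v
    _ ≤ max R 0 * ‖v‖ := mul_le_mul_of_nonneg_right (hRnn x hx) (norm_nonneg v)
  have hbddB : BddBelow (suppFn K '' sphere (0:En n) 1) := by
    refine ⟨0, ?_⟩
    rintro a ⟨v, hv, rfl⟩
    have : (inner ℝ (0:En n) v : ℝ) ≤ suppFn K v := le_csSup (hbddI v) ⟨0, h0, rfl⟩
    simpa using this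
  intro y hy
  rw [mem_ball, dist_zero_right] at hy
  by_contra hyc
  obtain ⟨f, u, hfK, hfy⟩ := geometric_hahn_banach_closed_point (hKc.closure) isClosed_closure hyc
  set z := (InnerProductSpace.toDual ℝ (En n)).symm f with hz
  have hfz : ∀ a : En n, (inner ℝ z a : ℝ) = f a := fun a => InnerProductSpace.toDual_symm_apply
  have hz0 : z ≠ 0 := by
    intro h0z
    have h1 : f 0 < u := hfK 0 (subset_closure h0)
    have h2 : f y = 0 := by rw [← hfz y, h0z]; simp
    simp at h1
    linarith [hfy, h2 ▸ hfy]
  have hnz : 0 < ‖z‖ := norm_pos_iff.2 hz0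
  set v := ‖z‖⁻¹ • z with hv
  have hvs : v ∈ sphere (0:En n) 1 := by
    simp [hv, norm_smul, abs_of_pos (inv_pos.2 hnz), inv_mul_cancel₀ hnz.ne']
  have hsupp : suppFn K v ≤ ‖z‖⁻¹ * u := by
    refine csSup_le ⟨(inner ℝ (0:En n) v : ℝ), ⟨0, h0, rfl⟩⟩ ?_
    rintro a ⟨x, hx, rfl⟩
    show (inner ℝ x v : ℝ) ≤ ‖z‖⁻¹ * u
    have heq : (inner ℝ x v : ℝ) = ‖z‖⁻¹ * (inner ℝ z x : ℝ) := by
      rw [hv, real_inner_smul_right, real_inner_comm]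
    rw [heq, hfz x]
    exact mul_le_mul_of_nonneg_left (hfK x (subset_closure hx)).le (inv_nonneg.2 hnz.le)
  have hyv : (inner ℝ y v : ℝ) ≤ ‖y‖ := by
    calc (inner ℝ y v : ℝ) ≤ ‖y‖ * ‖v‖ := real_inner_le_norm y v
    _ = ‖y‖ := by rw [mem_sphere_zero_iff_norm.1 hvs, mul_one]
  have huv : ‖z‖⁻¹ * u < (inner ℝ y v : ℝ) := by
    have heq : (inner ℝ y v : ℝ) = ‖z‖⁻¹ * (inner ℝ z y : ℝ) := by
      rw [hv, real_inner_smul_right, real_inner_comm]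
    rw [heq, hfz y]
    exact mul_lt_mul_of_pos_left hfy (inv_pos.2 hnz)
  have hm : mConst K ≤ suppFn K v := csInf_le hbddB ⟨v, hvs, rfl⟩
  linarith

/-- Points of `E` outside the core `(1-δ)•K` are close to the frontier of `E`. -/
lemma infDist_le_of_not_core {K E : Set (En n)} (hKo : IsOpen K) (hKc : Convex ℝ K)
    (h0K : (0:En n) ∈ K) {M : ℝ} (hM0 : 0 < M) (hMb : ∀ y ∈ K, ‖y‖ ≤ M)
    (hEo : IsOpen E) {δ : ℝ} (hδ0 : 0 < δ) (hδ1 : δ < 1)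
    (hupp : E ⊆ (1 + δ) • K) {x : En n} (hx : x ∈ E) (hxc : x ∉ (1 - δ) • K) :
    infDist x (frontier E) ≤ 2 * δ * M := by
  by_contra hcon
  push_neg at hcon
  set d := infDist x (frontier E) with hd
  set ρ := (2 * δ * M + d) / 2 with hρdef
  have hMδ : 0 < 2 * δ * M := by positivity
  have hρ1 : 2 * δ * M < ρ := by rw [hρdef]; linarith
  have hρ2 : ρ < d := by rw [hρdef]; linarith
  have hρ0 : 0 < ρ := by linarith
  have hball : ball x d ⊆ E := ball_subset_of_le_infDist hEo hx le_rfl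
  have habs : Absorbent ℝ K := absorbent_nhds_zero (hKo.mem_nhds h0K)
  set g := gauge K x with hgdef
  have hg : 1 - δ ≤ g := by
    by_contra hgc
    push_neg at hgc
    exact hxc ((mem_smul_iff_gauge_lt hKo hKc h0K (by linarith)).2 hgc)
  have hgpos : 0 < g := by linarith
  have hx0 : x ≠ 0 := by
    intro h
    rw [h] at hgdef
    rw [hgdef, gauge_zero] at hgpos
    exact lt_irrefl 0 hgpos
  have hnx : 0 < ‖x‖ := norm_pos_iff.2 hx0
  have hxg : ‖x‖ ≤ g * M := norm_le_gauge_mul habs hM0 hMb x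
  set cc := ρ / ‖x‖ with hcc
  have hcc0 : 0 < cc := by positivity
  have hccx : cc * ‖x‖ = ρ := by rw [hcc]; field_simp
  set p := x + cc • x with hp
  have hpx : p = (1 + cc) • x := by rw [hp, add_smul, one_smul]
  have hpball : p ∈ ball x d := by
    rw [mem_ball]
    have : dist p x = cc * ‖x‖ := by
      rw [hp, dist_eq_norm, add_sub_cancel_left, norm_smul, Real.norm_eq_abs,
        abs_of_pos hcc0]
    rw [this, hccx]
    exact hρ2
  have hpK : gauge K p < 1 + δ :=
    (mem_smul_iff_gauge_lt hKo hKc h0K (by linarith)).1 (hupp (hball hpball))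
  have hgp : gauge K p = (1 + cc) * g := by
    rw [hpx, hgdef, gauge_smul_of_nonneg (by linarith : (0:ℝ) ≤ 1 + cc), smul_eq_mul]
  rw [hgp] at hpK
  have h1 : cc * g < 1 + δ - g := by nlinarith
  have h2 : ρ ≤ cc * (g * M) := by
    rw [← hccx]
    exact mul_le_mul_of_nonneg_left hxg hcc0.le
  have h3 : cc * (g * M) < (1 + δ - g) * M := by
    have := mul_lt_mul_of_pos_right h1 hM0
    nlinarith
  have h4 : (1 + δ - g) * M ≤ 2 * δ * M := by nlinarith
  linarith


set_option maxHeartbeats 4000000 in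
/-- **Lemma (global John property of minimizers close to `K`).** Let
`1 ≤ M_K/m_K ≤ n`, let `J₀ = J₀(n,ε,r)`, `c = c(n,ε,r)` be the constants for which every
component of an `(ε,r)`-minimizer of `P_K` is a `(J₀, c r)`-John domain, and let
`0 < δ ≤ c r / (3 n J₀)`. Then any (component of an) `(ε,r)`-minimizer `E` of `P_K` with
`(1−δ)K ⊆ E ⊆ (1+δ)K` is a `J`-John domain with John center the origin, where
`J = J(n, ε, r)`. -/
theorem minimizer_close_to_K_isJohn
    (n : ℕ) (hn : 2 ≤ n) (ε r J₀ c : ℝ) (hε : 0 < ε) (hr : 0 < r)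
    (hJ₀ : 0 < J₀) (hc : 0 < c)
    (hJohnLoc : ∀ K E : Set (En n),
      WulffShape K → (∫ x in K, (x : En n)) = 0 → MConst K ≤ n * mConst K →
      WulffMinimizer K ε r E → IsOpen E →
      ∀ x ∈ E, IsJohnLoc J₀ (c * r) (connectedComponentIn E x)) :
    ∃ J : ℝ, 1 ≤ J ∧
      ∀ (K E : Set (En n)) (δ : ℝ),
        WulffShape K → (∫ x in K, (x : En n)) = 0 → MConst K ≤ n * mConst K →
        0 < δ → δ ≤ c * r / (3 * n * J₀) →
        WulffMinimizer K ε r E → IsOpen E → IsConnected E →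
        (1 - δ) • K ⊆ E → E ⊆ (1 + δ) • K →
        IsJohnWithCenter J E 0 := by
  classical
  have hnR : (2:ℝ) ≤ (n:ℝ) := by exact_mod_cast hn
  have hn0 : (0:ℝ) < (n:ℝ) := by linarith
  refine ⟨9 * (n:ℝ)^2 * (J₀ + 1), by nlinarith, ?_⟩
  intro K E δ hK hbar hMm hδ0 hδbound hmin hEo hEconn hlow hupp
  obtain ⟨hKo, hKc, hKb, h0K, hKvol⟩ := hK
  haveI : Nontrivial (En n) := by
    have : 0 < Module.finrank ℝ (En n) := by rw [finrank_euclideanSpace_fin]; omega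
    exact Module.nontrivial_of_finrank_pos this
  have hfin : Module.finrank ℝ (En n) = n := finrank_euclideanSpace_fin
  set J := 9 * (n:ℝ)^2 * (J₀ + 1) with hJdef
  set M := MConst K with hMdef
  set m := mConst K with hmdef
  have hMb : ∀ x ∈ K, ‖x‖ ≤ M := norm_le_MConst hn hKb h0K
  have hM00 : 0 ≤ M := by
    have := hMb 0 h0K; simpa using this
  set V := volume (ball (0:En n) 1) with hV
  have hV0 : V ≠ 0 := (measure_ball_pos volume 0 one_pos).ne'
  have hVtop : V ≠ ⊤ := measure_ball_lt_top.ne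
  have hnn0 : n ≠ 0 := by omega
  -- 1 ≤ M
  have hM1 : 1 ≤ M := by
    have hsub : K ⊆ closedBall (0:En n) M := fun x hx => mem_closedBall_zero_iff.2 (hMb x hx)
    have h1 : V ≤ volume (closedBall (0:En n) M) := by
      rw [← hKvol]; exact measure_mono hsub
    rw [Measure.addHaar_closedBall volume (0:En n) hM00, hfin] at h1
    have h2 : (1:ℝ≥0∞) * V ≤ ENNReal.ofReal (M ^ n) * V := by rwa [one_mul]
    have h3 : (1:ℝ≥0∞) ≤ ENNReal.ofReal (M ^ n) :=
      (ENNReal.mul_le_mul_iff_left hV0 hVtop).1 h2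
    have h4 : (1:ℝ) ≤ M ^ n := by
      rwa [← ENNReal.ofReal_one, ENNReal.ofReal_le_ofReal_iff (by positivity)] at h3
    by_contra hM1c
    push_neg at hM1c
    have : M ^ n < 1 ^ n := pow_lt_pow_left₀ hM1c hM00 hnn0
    simp at this
    linarith
  have hMpos : 0 < M := lt_of_lt_of_le one_pos hM1
  have hnm : 1 ≤ (n:ℝ) * m := le_trans hM1 hMm
  have hm0 : 0 < m := by nlinarith
  have hm1 : m ≤ 1 := by
    have hmb := ball_mConst_subset_closure hn hKc hKb h0K
    have h1 : volume (ball (0:En n) m) ≤ volume (closure K) := measure_mono hmb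
    have h2 : volume (closure K) ≤ V := by
      have hcl : closure K ⊆ K ∪ frontier K := by
        intro y hy
        by_cases h : y ∈ K
        · exact Or.inl h
        · exact Or.inr ⟨hy, fun hi => h (hKo.interior_eq ▸ hi)⟩
      calc volume (closure K) ≤ volume (K ∪ frontier K) := measure_mono hcl
      _ ≤ volume K + volume (frontier K) := measure_union_le _ _
      _ = V := by rw [hKc.addHaar_frontier volume, add_zero, hKvol]
    rw [Measure.addHaar_ball volume (0:En n) hm0.le, hfin] at h1
    have h3 : ENNReal.ofReal (m ^ n) * V ≤ 1 * V := by rw [one_mul]; exact le_trans h1 h2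
    have h4 : ENNReal.ofReal (m ^ n) ≤ 1 := (ENNReal.mul_le_mul_iff_left hV0 hVtop).1 h3
    have h5 : m ^ n ≤ 1 := by
      rwa [← ENNReal.ofReal_one, ENNReal.ofReal_le_ofReal_iff zero_le_one] at h4
    by_contra hm1c
    push_neg at hm1c
    have : (1:ℝ) ^ n < m ^ n := pow_lt_pow_left₀ hm1c zero_le_one hnn0
    simp at this
    linarith
  have hMn : M ≤ (n:ℝ) := by nlinarith
  -- basic structure of E
  have h0E : (0:En n) ∈ E := hlow ⟨0, h0K, smul_zero _⟩
  have hEb : IsBounded E := (hKb.smul₀ (1+δ)).subset hupp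
  have hfr : (frontier E).Nonempty := by
    rw [nonempty_frontier_iff]
    refine ⟨⟨0, h0E⟩, fun h => ?_⟩
    rw [h] at hEb
    exact NormedSpace.unbounded_univ ℝ (En n) hEb
  have hLoc : IsJohnLoc J₀ (c * r) E := by
    have := hJohnLoc K E ⟨hKo, hKc, hKb, h0K, hKvol⟩ hbar hMm hmin hEo 0 h0E
    rwa [hEconn.isPreconnected.connectedComponentIn h0E] at this
  have hcr : 0 < c * r := mul_pos hc hr
  -- J₀ > 1
  have hJ₀1 : 1 < J₀ := by
    obtain ⟨z₀, hz₀⟩ := hfr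
    obtain ⟨x₀, hx₀E, hx₀d⟩ := Metric.mem_closure_iff.1 (frontier_subset_closure hz₀)
      ((c*r)/2) (by positivity)
    obtain ⟨w₀, ⟨hw₀b, hw₀E⟩, hw₀d, -⟩ := hLoc z₀ hz₀ ((c*r)/2) (by positivity)
      (by linarith) x₀ ⟨by rwa [mem_ball, dist_comm], hx₀E⟩
    have h1 : infDist w₀ (frontier E) < J₀ * ((c*r)/2) := by
      calc infDist w₀ (frontier E) ≤ dist w₀ z₀ := infDist_le_dist_of_mem hz₀
      _ < J₀ * ((c*r)/2) := mem_ball.1 hw₀b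
    have h2 : J₀⁻¹ * ((c*r)/2) < J₀ * ((c*r)/2) := lt_of_le_of_lt hw₀d h1
    have h3 : J₀⁻¹ < J₀ := lt_of_mul_lt_mul_right h2 (by positivity : (0:ℝ) ≤ (c*r)/2)
    have h4 : (1:ℝ) < J₀ * J₀ := by
      have := mul_lt_mul_of_pos_right h3 hJ₀
      rwa [inv_mul_cancel₀ hJ₀.ne'] at this
    nlinarith
  -- clearance upper bound
  have hclear : ∀ w ∈ E, infDist w (frontier E) ≤ 1 + δ := by
    intro w hw
    by_contra hcon
    push_neg at hcon
    set d := infDist w (frontier E) with hd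
    have hd0 : 0 < d := by linarith
    have hball : ball w d ⊆ (1+δ) • K := (ball_subset_of_le_infDist hEo hw le_rfl).trans hupp
    have h1 : volume (ball w d) ≤ volume ((1+δ) • K) := measure_mono hball
    rw [Measure.addHaar_ball volume w hd0.le, hfin, Measure.addHaar_smul volume, hfin,
      hKvol, ← hV] at h1
    rw [abs_of_pos (by positivity : (0:ℝ) < (1+δ)^n)] at h1
    have h2 : (d:ℝ)^n ≤ (1+δ)^n := by
      have := (ENNReal.mul_le_mul_iff_left hV0 hVtop).1 h1
      rwa [ENNReal.ofReal_le_ofReal_iff (by positivity)] at this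
    have h3 : (1+δ)^n < d^n := pow_lt_pow_left₀ hcon (by positivity) hnn0
    linarith
  have h3nδ : 3 * (n:ℝ) * J₀ * δ ≤ c * r := by
    rw [le_div_iff₀ (by positivity : (0:ℝ) < 3 * (n:ℝ) * J₀)] at hδbound
    linarith
  -- δ < 1/4
  have hδ14 : δ < 1/4 := by
    by_contra hδge
    push_neg at hδge
    set r' := (27/10) * (n:ℝ) * δ * J₀ with hr'
    have hr'0 : 0 < r' := by positivity
    have hXpos : (0:ℝ) < 3 * (n:ℝ) * J₀ * δ := by positivity
    have hr'cr : r' < c * r := by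
      have : r' = (9/10) * (3 * (n:ℝ) * J₀ * δ) := by rw [hr']; ring
      linarith [h3nδ]
    obtain ⟨z₀, hz₀⟩ := hfr
    obtain ⟨x₀, hx₀E, hx₀d⟩ := Metric.mem_closure_iff.1 (frontier_subset_closure hz₀) r' hr'0
    obtain ⟨w, ⟨hwb, hwE⟩, hwd, -⟩ := hLoc z₀ hz₀ r' hr'0 hr'cr x₀
      ⟨by rwa [mem_ball, dist_comm], hx₀E⟩
    have hinv : J₀⁻¹ * r' = (27/10) * (n:ℝ) * δ := by
      rw [hr']; field_simp
    rw [hinv] at hwd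
    have hcl := hclear w hwE
    have hnδ : 2*δ ≤ (n:ℝ)*δ := mul_le_mul_of_nonneg_right hnR hδ0.le
    linarith
  have hδ1 : δ < 1 := by linarith
  have h1δ : 0 < 1 - δ := by linarith
  -- core geometry
  have hcore0 : (0:En n) ∈ (1-δ) • K := ⟨0, h0K, smul_zero _⟩
  have hconv' : Convex ℝ ((1-δ) • K) := hKc.smul _
  have hmhalf : ball (0:En n) (m/2) ⊆ K := by
    intro y hy
    rw [mem_ball, dist_zero_right] at hy
    have h2y : (2:ℝ) • y ∈ closure K := by
      apply ball_mConst_subset_closure hn hKc hKb h0K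
      rw [mem_ball, dist_zero_right, norm_smul]
      simp only [Real.norm_ofNat]
      linarith
    have hcomb := hKc.combo_interior_closure_mem_interior (x := 0) (y := (2:ℝ) • y)
      (by rw [hKo.interior_eq]; exact h0K) h2y one_half_pos (by norm_num : (0:ℝ) ≤ 1/2)
      (by norm_num)
    have heq : (1/2 : ℝ) • (0:En n) + (1/2 : ℝ) • ((2:ℝ) • y) = y := by
      rw [smul_zero, zero_add, smul_smul]; norm_num
    rw [heq, hKo.interior_eq] at hcomb
    exact hcomb
  set ρ₀ := (1-δ) * m / 2 with hρ₀def
  have hρ₀ : 0 < ρ₀ := by rw [hρ₀def]; positivity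
  have hball0 : ball (0:En n) ρ₀ ⊆ (1-δ) • K := by
    intro y hy
    rw [mem_ball, dist_zero_right] at hy
    rw [mem_smul_set_iff_inv_smul_mem₀ (ne_of_gt h1δ)]
    apply hmhalf
    rw [mem_ball, dist_zero_right, norm_smul, Real.norm_eq_abs, abs_of_pos (inv_pos.2 h1δ)]
    rw [hρ₀def] at hy
    calc (1-δ)⁻¹ * ‖y‖ < (1-δ)⁻¹ * ((1-δ) * m / 2) := by
          exact mul_lt_mul_of_pos_left hy (inv_pos.2 h1δ)
    _ = m/2 := by field_simp
  have hseg : ∀ p ∈ (1-δ) • K, ∀ t ∈ Icc (0:ℝ) 1,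
      t * ρ₀ ≤ infDist ((1-t) • p) (frontier E) := by
    intro p hp t ht
    obtain ⟨ht0, ht1⟩ := ht
    rcases eq_or_lt_of_le ht0 with h | h
    · rw [← h, zero_mul]; exact infDist_nonneg
    · refine le_infDist_frontier_of_ball_subset hEo hfr ?_
      intro q hq
      apply hlow
      have hb : ‖q - (1-t) • p‖ < t * ρ₀ := by
        rw [mem_ball, dist_eq_norm] at hq; exact hq
      have hbb : t⁻¹ • (q - (1-t) • p) ∈ ball (0:En n) ρ₀ := by
        rw [mem_ball, dist_zero_right, norm_smul, Real.norm_eq_abs, abs_of_pos (inv_pos.2 h)]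
        calc t⁻¹ * ‖q - (1-t) • p‖ < t⁻¹ * (t * ρ₀) := mul_lt_mul_of_pos_left hb (inv_pos.2 h)
        _ = ρ₀ := by field_simp
      have hmem := hconv' hp (hball0 hbb) (by linarith : (0:ℝ) ≤ 1 - t) ht0 (by ring)
      have heq : (1-t) • p + t • (t⁻¹ • (q - (1-t) • p)) = q := by
        rw [smul_smul, mul_inv_cancel₀ (ne_of_gt h), one_smul]; abel
      rwa [heq] at hmem
  have hwnorm : ∀ y ∈ (1-δ) • K, ‖y‖ ≤ M := by
    rintro y ⟨k, hk, rfl⟩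
    rw [norm_smul, Real.norm_eq_abs, abs_of_pos h1δ]
    nlinarith [hMb k hk, norm_nonneg k]
  -- arithmetic facts about J
  have hJpos : 0 < J := by rw [hJdef]; positivity
  have hδ34 : (3:ℝ)/4 ≤ 1 - δ := by linarith
  have hnm' : (n:ℝ) ≤ (n:ℝ)^2 * m := by nlinarith [hnm, hn0]
  have h9 : (36:ℝ) ≤ 9 * (n:ℝ)^2 := by nlinarith
  have hmaster : 2*(J₀+1) * (n:ℝ) ≤ J * ρ₀ := by
    rw [hJdef, hρ₀def]
    have s1 : (27:ℝ)/8 * ((J₀+1) * (n:ℝ)) ≤ (27:ℝ)/8 * ((J₀+1) * ((n:ℝ)^2 * m)) :=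
      mul_le_mul_of_nonneg_left (mul_le_mul_of_nonneg_left hnm' (by linarith)) (by norm_num)
    have s3 : 9 * (n:ℝ)^2 * (J₀+1) * ((3/4)*m/2) ≤ 9 * (n:ℝ)^2 * (J₀+1) * ((1-δ)*m/2) := by
      have hh : (3:ℝ)/4*m/2 ≤ (1-δ)*m/2 := by nlinarith
      exact mul_le_mul_of_nonneg_left hh (by positivity)
    have s2 : 9 * (n:ℝ)^2 * (J₀+1) * ((3/4)*m/2) = (27:ℝ)/8 * ((J₀+1) * ((n:ℝ)^2 * m)) := by
      ring
    nlinarith [mul_nonneg (by linarith : (0:ℝ) ≤ J₀+1) hn0.le]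
  have hJM : M ≤ J * ρ₀ := by
    have : (n:ℝ) ≤ 2*(J₀+1) * (n:ℝ) := by nlinarith
    linarith [hMn, hmaster]
  have hJ0le : J₀ ≤ J := by rw [hJdef]; nlinarith [h9, hJ₀]
  have hJkey : (2*J₀+1) * (n:ℝ) ≤ J * ρ₀ := by
    have : (2*J₀+1) * (n:ℝ) ≤ 2*(J₀+1) * (n:ℝ) := by nlinarith
    linarith [hmaster]
  have h2J : 2*J₀ + 1 ≤ J := by rw [hJdef]; nlinarith [h9, hJ₀1]
  -- the John property
  refine ⟨h0E, ?_⟩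
  intro x hxE
  by_cases hxcore : x ∈ (1-δ) • K
  · -- radial segment to the origin
    refine ⟨fun t => (1-t) • x,
      ((continuous_const.sub continuous_id).smul continuous_const).continuousOn,
      by simp, by simp, ?_, ?_⟩
    · intro t ht
      apply hlow
      have hmem := hconv' hxcore hcore0 (by linarith [ht.2] : (0:ℝ) ≤ 1 - t) ht.1 (by ring)
      have heq : (1-t) • x + t • (0:En n) = (1-t) • x := by rw [smul_zero, add_zero]
      show (1-t) • x ∈ (1-δ) • K
      rwa [heq] at hmem
    · intro t ht
      have hlip : eVariationOn (fun u => (1-u) • x) (Icc 0 t) ≤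
          ENNReal.ofReal (‖x‖ * (t - 0)) := by
        apply evar_le_of_lip (norm_nonneg x)
        intro u hu v hv huv
        have heq : (1-u) • x - (1-v) • x = (v - u) • x := by
          rw [← sub_smul]; ring_nf
        rw [dist_eq_norm, heq, norm_smul, Real.norm_eq_abs, abs_of_nonneg (by linarith)]
        exact le_of_eq (by ring)
      refine le_trans hlip (ENNReal.ofReal_le_ofReal ?_)
      have hs := hseg x hxcore t ht
      have hxM : ‖x‖ ≤ M := hwnorm x hxcore
      have ht0 := ht.1
      calc ‖x‖ * (t - 0) = ‖x‖ * t := by ring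
      _ ≤ (J * ρ₀) * t := mul_le_mul_of_nonneg_right (le_trans hxM hJM) ht0
      _ = J * (t * ρ₀) := by ring
      _ ≤ J * infDist ((1-t) • x) (frontier E) := mul_le_mul_of_nonneg_left hs hJpos.le
  · -- boundary case: local John curve followed by a radial segment
    set r' := (27/10) * (n:ℝ) * δ * J₀ with hr'
    have hr'0 : 0 < r' := by positivity
    have hXpos : (0:ℝ) < 3 * (n:ℝ) * J₀ * δ := by positivity
    have hr'cr : r' < c * r := by
      have : r' = (9/10) * (3 * (n:ℝ) * J₀ * δ) := by rw [hr']; ring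
      linarith [h3nδ]
    have hδn2 : 2*δ*M ≤ 2*δ*(n:ℝ) := by
      have := mul_le_mul_of_nonneg_left hMn (by positivity : (0:ℝ) ≤ 2*δ)
      linarith
    have hδnn : (0:ℝ) < (n:ℝ)*δ := mul_pos hn0 hδ0
    have hxfar : infDist x (frontier E) ≤ 2 * δ * M :=
      infDist_le_of_not_core hKo hKc h0K hMpos hMb hEo hδ0 hδ1 hupp hxE hxcore
    have hxlt : infDist x (frontier E) < r' := by
      have hJm : (27/10)*((n:ℝ)*δ) * 1 ≤ (27/10)*((n:ℝ)*δ) * J₀ :=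
        mul_le_mul_of_nonneg_left hJ₀1.le (by positivity)
      have : r' = (27/10)*((n:ℝ)*δ) * J₀ := by rw [hr']; ring
      linarith
    obtain ⟨z, hzfr, hzd⟩ := (infDist_lt_iff hfr).1 hxlt
    obtain ⟨w, ⟨hwb, hwE⟩, hwinf, γ₁, hγ₁⟩ :=
      hLoc z hzfr r' hr'0 hr'cr x ⟨mem_ball.2 hzd, hxE⟩
    obtain ⟨hγ₁c, hγ₁0, hγ₁1, hγ₁mem, hγ₁var⟩ := hγ₁
    have hinv : J₀⁻¹ * r' = (27/10) * (n:ℝ) * δ := by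
      rw [hr']; field_simp
    rw [hinv] at hwinf
    have hwcore : w ∈ (1-δ) • K := by
      by_contra hwc
      have := infDist_le_of_not_core hKo hKc h0K hMpos hMb hEo hδ0 hδ1 hupp hwE hwc
      linarith
    set clw := infDist w (frontier E) with hclw
    have hclw0 : 0 < clw := by linarith
    have hwM : ‖w‖ ≤ M := hwnorm w hwcore
    set γ : ℝ → En n := fun t => γ₁ (min (2*t) 1) + (min (1 - 2*t) 0) • w with hγdef
    have hγeq1 : ∀ u : ℝ, u ≤ 1/2 → γ u = γ₁ (2*u) := by
      intro u hu
      rw [hγdef]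
      simp only
      rw [min_eq_left (by linarith), min_eq_right (by linarith), zero_smul, add_zero]
    have hγeq2 : ∀ u : ℝ, 1/2 ≤ u → γ u = (2 - 2*u) • w := by
      intro u hu
      rw [hγdef]
      simp only
      rw [min_eq_right (by linarith), min_eq_left (by linarith)]
      calc γ₁ 1 + (1 - 2*u) • w = (1:ℝ) • w + (1 - 2*u) • w := by rw [hγ₁1, one_smul]
      _ = (2 - 2*u) • w := by rw [← add_smul]; ring_nf
    have hγcont : ContinuousOn γ (Icc 0 1) := by
      rw [hγdef]
      apply ContinuousOn.add
      · apply hγ₁c.comp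
        · exact ((continuous_const.mul continuous_id).min continuous_const).continuousOn
        · intro t ht
          exact ⟨le_min (by linarith [ht.1]) zero_le_one, min_le_right _ _⟩
      · exact (((continuous_const.sub (continuous_const.mul continuous_id)).min
          continuous_const).smul continuous_const).continuousOn
    refine ⟨γ, hγcont, ?_, ?_, ?_, ?_⟩
    · rw [hγeq1 0 (by norm_num)]
      rw [show (2:ℝ) * 0 = 0 by ring, hγ₁0]
    · rw [hγeq2 1 (by norm_num)]
      norm_num
    · intro t ht
      rcases le_or_gt t (1/2) with h | h
      · rw [hγeq1 t h]
        exact hγ₁mem (2*t) ⟨by linarith [ht.1], by linarith⟩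
      · rw [hγeq2 t h.le]
        apply hlow
        have hmem := hconv' hwcore hcore0 (by linarith [ht.2] : (0:ℝ) ≤ 2 - 2*t)
          (by linarith : (0:ℝ) ≤ 2*t - 1) (by ring)
        have heq : (2-2*t) • w + (2*t-1) • (0:En n) = (2-2*t) • w := by
          rw [smul_zero, add_zero]
        rwa [heq] at hmem
    · intro t ht
      rcases le_or_gt t (1/2) with h | h
      · have he : EqOn γ (γ₁ ∘ fun u => 2*u) (Icc 0 t) := fun u hu => by
          rw [hγeq1 u (le_trans hu.2 h)]; rfl
        rw [eVariationOn.eq_of_eqOn he]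
        have hmono : MonotoneOn (fun u : ℝ => 2*u) (Icc 0 t) := by
          intro a _ b _ hab
          simp only
          linarith
        have hmaps : MapsTo (fun u : ℝ => 2*u) (Icc 0 t) (Icc 0 (2*t)) := by
          intro u hu
          obtain ⟨hu1, hu2⟩ := hu
          constructor
          · show (0:ℝ) ≤ 2*u
            linarith
          · show 2*u ≤ 2*t
            linarith
        have hcomp : eVariationOn (γ₁ ∘ fun u => 2*u) (Icc 0 t) ≤
            eVariationOn γ₁ (Icc 0 (2*t)) :=
          eVariationOn.comp_le_of_monotoneOn γ₁ (fun u => 2*u) hmono hmaps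
        refine le_trans hcomp (le_trans (hγ₁var (2*t) ⟨by linarith [ht.1], by linarith⟩) ?_)
        rw [hγeq1 t h]
        exact ENNReal.ofReal_le_ofReal
          (mul_le_mul_of_nonneg_right hJ0le infDist_nonneg)
      · have hsplit := eVariationOn.Icc_add_Icc γ (s := (univ : Set ℝ))
          (show (0:ℝ) ≤ 1/2 by norm_num) h.le (mem_univ _)
        simp only [univ_inter] at hsplit
        rw [← hsplit]
        have hA : eVariationOn γ (Icc 0 (1/2)) ≤ ENNReal.ofReal (J₀ * clw) := by
          have he : EqOn γ (γ₁ ∘ fun u => 2*u) (Icc 0 (1/2)) := fun u hu => by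
            rw [hγeq1 u hu.2]; rfl
          rw [eVariationOn.eq_of_eqOn he]
          have hmono : MonotoneOn (fun u : ℝ => 2*u) (Icc 0 (1/2 : ℝ)) := by
            intro a _ b _ hab
            simp only
            linarith
          have hmaps : MapsTo (fun u : ℝ => 2*u) (Icc 0 (1/2 : ℝ)) (Icc 0 (1:ℝ)) := by
            intro u hu
            obtain ⟨hu1, hu2⟩ := hu
            constructor
            · show (0:ℝ) ≤ 2*u
              linarith
            · show 2*u ≤ (1:ℝ)
              linarith
          have hcomp : eVariationOn (γ₁ ∘ fun u => 2*u) (Icc 0 (1/2)) ≤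
              eVariationOn γ₁ (Icc 0 1) :=
            eVariationOn.comp_le_of_monotoneOn γ₁ (fun u => 2*u) hmono hmaps
          refine le_trans hcomp (le_trans (hγ₁var 1 ⟨zero_le_one, le_rfl⟩) ?_)
          rw [hγ₁1, ← hclw]
        have hB : eVariationOn γ (Icc (1/2) t) ≤
            ENNReal.ofReal ((2*‖w‖) * (t - 1/2)) := by
          have he : EqOn γ (fun u => (2 - 2*u) • w) (Icc (1/2) t) := fun u hu =>
            hγeq2 u hu.1
          rw [eVariationOn.eq_of_eqOn he]
          apply evar_le_of_lip (by positivity)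
          intro u hu v hv huv
          have heq : (2 - 2*u) • w - (2 - 2*v) • w = (2*v - 2*u) • w := by
            rw [← sub_smul]; ring_nf
          rw [dist_eq_norm, heq, norm_smul, Real.norm_eq_abs, abs_of_nonneg (by linarith)]
          exact le_of_eq (by ring)
        have hsum := add_le_add hA hB
        refine le_trans hsum ?_
        rw [← ENNReal.ofReal_add (by positivity)
          (mul_nonneg (by positivity) (by linarith : (0:ℝ) ≤ t - 1/2))]
        refine ENNReal.ofReal_le_ofReal ?_
        rw [hγeq2 t h.le]
        obtain ⟨s, hs⟩ : ∃ s : ℝ, s = 2 - 2*t := ⟨_, rfl⟩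
        rw [← hs]
        have hs0 : 0 ≤ s := by rw [hs]; linarith only [ht.2]
        have hs1 : s < 1 := by rw [hs]; linarith only [h]
        have h2t : (2*‖w‖) * (t - 1/2) = (1 - s)*‖w‖ := by rw [hs]; ring
        rw [h2t]
        have hlb1 : (1 - s) * ρ₀ ≤ infDist (s • w) (frontier E) := by
          have hh := hseg w hwcore (1 - s) ⟨by linarith, by linarith⟩
          have heq : (1 - (1 - s)) • w = s • w := by
            congr 1
            ring
          rwa [heq] at hh
        have hlb2 : clw - (1 - s) * ‖w‖ ≤ infDist (s • w) (frontier E) := by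
          have hd := infDist_le_infDist_add_dist (x := w) (y := s • w) (s := frontier E)
          have hdw : dist w (s • w) = (1 - s) * ‖w‖ := by
            rw [dist_eq_norm]
            have hh : w - s • w = (1 - s) • w := by
              rw [sub_smul, one_smul]
            rw [hh, norm_smul, Real.norm_eq_abs, abs_of_nonneg (by linarith)]
          rw [hdw] at hd
          rw [hclw]
          linarith only [hd]
        rcases le_or_gt clw (2 * ((1 - s) * ‖w‖)) with hcase | hcase
        · have e1 : J₀ * clw + (1-s)*‖w‖ ≤ (2*J₀+1) * ((1-s)*‖w‖) := by
            have h12 := mul_le_mul_of_nonneg_left hcase hJ₀.le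
            linarith only [h12]
          have e2 : (2*J₀+1) * ((1-s)*‖w‖) ≤ (2*J₀+1) * ((1-s)*(n:ℝ)) := by
            have hh : (1-s)*‖w‖ ≤ (1-s)*(n:ℝ) :=
              mul_le_mul_of_nonneg_left (le_trans hwM hMn) (by linarith only [hs1])
            exact mul_le_mul_of_nonneg_left hh (by linarith only [hJ₀1])
          have e3 : (2*J₀+1) * ((1-s)*(n:ℝ)) ≤ (J * ρ₀) * (1-s) := by
            have h34 := mul_le_mul_of_nonneg_right hJkey (by linarith only [hs1] : (0:ℝ) ≤ 1-s)
            linarith only [h34]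
          have e5 : J * ((1-s)*ρ₀) ≤ J * infDist (s • w) (frontier E) :=
            mul_le_mul_of_nonneg_left hlb1 hJpos.le
          linarith only [e1, e2, e3, e5]
        · have d1 : (1-s)*‖w‖ ≤ clw/2 := by linarith only [hcase]
          have d2 : clw/2 ≤ infDist (s • w) (frontier E) := by linarith only [hlb2, d1]
          have e1 : J₀*clw + (1-s)*‖w‖ ≤ (2*J₀+1)*(clw/2) := by linarith only [d1]
          have e2 : (2*J₀+1)*(clw/2) ≤ J*(clw/2) :=
            mul_le_mul_of_nonneg_right h2J (by linarith only [hclw0])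
          have e3 : J*(clw/2) ≤ J*infDist (s • w) (frontier E) :=
            mul_le_mul_of_nonneg_left d2 hJpos.le
          linarith only [e1, e2, e3]

end
end

section
/- Let K ⊂ ℝⁿ be an open bounded convex set containing the origin with B_ρ ⊂ K ⊂ B_{nρ} for some ρ ∈ (0,1), let 0 < δ < 1/2, and let E ⊂ ℝⁿ be an open set with (1−δ)K ⊂ E ⊂ (1+δ)K. Then for every z ∈ (1−2δ)K, the line segment L_z from z to the origin is contained in E and satisfies ℓ(L_z[z,a]) ≤ n·dist(a, ∂E) for every point a ∈ L_z; that is, L_z is an n-John curve joining z to the origin. -/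
open MeasureTheory Metric Set Filter Topology Bornology
open scoped ENNReal NNReal Pointwise

noncomputable section

variable {n : ℕ}

/-- **Case 1 of Lemma (John property of minimizers): radial segments are John curves.**
Let `K` be an open bounded convex set with `B_ρ ⊆ K ⊆ B_{nρ}` for some `ρ ∈ (0,1)`,
`0 < δ < 1/2`, and let `E` be open with `(1−δ)K ⊆ E ⊆ (1+δ)K`. Then for every
`z ∈ (1−2δ)K`, the segment `L_z` from `z` to the origin lies in `E` and
`ℓ(L_z[z, a]) ≤ n · dist(a, ∂E)` for every `a ∈ L_z`; i.e. `L_z` is an `n`-John curve. -/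
theorem radial_segment_is_john_curve
    (n : ℕ) (hn : 2 ≤ n) (K : Set (En n))
    (hKopen : IsOpen K) (hKconv : Convex ℝ K) (hKbdd : IsBounded K)
    (hK0 : (0 : En n) ∈ K)
    (ρ : ℝ) (hρ : ρ ∈ Ioo (0:ℝ) 1)
    (hK1 : ball (0 : En n) ρ ⊆ K) (hK2 : K ⊆ ball (0 : En n) (n * ρ))
    (δ : ℝ) (hδ0 : 0 < δ) (hδ : δ < 1/2)
    (E : Set (En n)) (hEopen : IsOpen E)
    (hE1 : (1 - δ) • K ⊆ E) (hE2 : E ⊆ (1 + δ) • K) :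
    ∀ z ∈ (1 - 2*δ) • K,
      segment ℝ (0 : En n) z ⊆ E ∧
      ∀ a ∈ segment ℝ (0 : En n) z, dist z a ≤ n * infDist a (frontier E) := by
  obtain ⟨hρ0, hρ1⟩ := hρ
  intro z hz
  obtain ⟨k, hk, rfl⟩ := hz
  -- key ball inclusion
  have key : ∀ t : ℝ, t ∈ Icc (0:ℝ) 1 →
      ball (t • (1 - 2*δ) • k) ((1 - δ - t*(1-2*δ)) * ρ) ⊆ (1 - δ) • K := by
    intro t ⟨ht0, ht1⟩ y hy
    set μ : ℝ := t * (1 - 2*δ) with hμdef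
    have hμ0 : 0 ≤ μ := mul_nonneg ht0 (by linarith)
    have hμle : μ ≤ 1 - 2*δ := by nlinarith
    have hpos : 0 < 1 - δ - μ := by linarith
    have ha : t • (1 - 2*δ) • k = μ • k := by rw [smul_smul]
    have hdiff : y - μ • k ∈ (1 - δ - μ) • K := by
      have h1 : (1 - δ - μ)⁻¹ • (y - μ • k) ∈ ball (0 : En n) ρ := by
        rw [mem_ball_zero_iff, norm_smul, norm_inv, Real.norm_of_nonneg hpos.le]
        rw [mem_ball, dist_eq_norm, ha] at hy
        rw [inv_mul_lt_iff₀ hpos]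
        linarith [hy]
      have := smul_mem_smul_set (a := 1 - δ - μ) (hK1 h1)
      rwa [smul_inv_smul₀ (ne_of_gt hpos)] at this
    have hsum : (1 - δ) • K = μ • K + (1 - δ - μ) • K := by
      have := hKconv.add_smul hμ0 hpos.le
      rw [show μ + (1 - δ - μ) = 1 - δ by ring] at this
      exact this
    rw [hsum]
    have : y = μ • k + (y - μ • k) := by abel
    rw [this]
    exact Set.add_mem_add (smul_mem_smul_set hk) hdiff
  -- membership of segment points in E
  have hsegE : ∀ t : ℝ, t ∈ Icc (0:ℝ) 1 → t • (1 - 2*δ) • k ∈ E := by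
    intro t ht
    apply hE1
    apply key t ht
    apply mem_ball_self
    have h1 : t * (1 - 2*δ) ≤ 1 - 2*δ := by nlinarith [ht.1, ht.2]
    have h2 : 0 < 1 - δ - t*(1-2*δ) := by linarith
    exact mul_pos h2 hρ0
  -- frontier E is nonempty
  have hEne : E.Nonempty := ⟨0, by simpa using hsegE 0 ⟨le_refl 0, zero_le_one⟩⟩
  have hEbdd : IsBounded E := by
    exact ((hKbdd.smul₀ (1 + δ)).subset hE2)
  have hfne : (frontier E).Nonempty := by
    rw [nonempty_frontier_iff]
    refine ⟨hEne, ?_⟩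
    intro h
    haveI : Nontrivial (En n) := ⟨⟨0, EuclideanSpace.single ⟨0, by omega⟩ 1, by
      intro hcon
      have := congrArg (fun v : En n => v ⟨0, by omega⟩) hcon
      simp at this⟩⟩
    exact NormedSpace.unbounded_univ ℝ (En n) (h ▸ hEbdd)
  -- lower bound on infDist
  have hinf : ∀ t : ℝ, t ∈ Icc (0:ℝ) 1 →
      (1 - δ - t*(1-2*δ)) * ρ ≤ infDist (t • (1 - 2*δ) • k) (frontier E) := by
    intro t ht
    by_contra hlt
    push_neg at hlt
    obtain ⟨y, hy, hdy⟩ := (infDist_lt_iff hfne).1 hlt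
    have hyE : y ∈ E := hE1 (key t ht (by rwa [mem_ball, dist_comm]))
    exact ((disjoint_frontier_iff_isOpen.2 hEopen).le_bot ⟨hy, hyE⟩ : False).elim
  constructor
  · intro a ha
    rw [segment_eq_image] at ha
    obtain ⟨t, ht, rfl⟩ := ha
    simpa using hsegE t ht
  · intro a ha
    rw [segment_eq_image] at ha
    obtain ⟨t, ht, rfl⟩ := ha
    simp only [smul_zero, zero_add]
    have hknorm : ‖k‖ < n * ρ := by
      have := hK2 hk
      rwa [mem_ball_zero_iff] at this
    obtain ⟨ht0, ht1⟩ := ht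
    have hdist : dist ((1 - 2*δ) • k) (t • (1 - 2*δ) • k) = ((1 - t) * (1 - 2*δ)) * ‖k‖ := by
      rw [dist_eq_norm, show (1 - 2*δ) • k - t • (1 - 2*δ) • k = ((1-t)*(1-2*δ)) • k by
        rw [smul_smul]; module]
      rw [norm_smul, Real.norm_of_nonneg (by nlinarith)]
    rw [hdist]
    have hlow := hinf t ⟨ht0, ht1⟩
    have hnρ : (0:ℝ) < n * ρ := by positivity
    have hk0 : 0 ≤ ‖k‖ := norm_nonneg k
    have h1 : (0:ℝ) ≤ (1-t)*(1-2*δ) := by nlinarith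
    calc (1-t)*(1-2*δ)*‖k‖ ≤ (1-t)*(1-2*δ)*(n*ρ) := by
          exact mul_le_mul_of_nonneg_left hknorm.le h1
      _ ≤ n*((1 - δ - t*(1-2*δ))*ρ) := by nlinarith [mul_nonneg hnρ.le hδ0.le]
      _ ≤ n * infDist (t • (1 - 2*δ) • k) (frontier E) :=
          mul_le_mul_of_nonneg_left hlow (by positivity)

end
end
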